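/- (Lyapunov derivative for the thrust direction controller.) Let k, k_r : ℝ → ℝ³ be differentiable with ‖k(t)‖ = ‖k_r(t)‖ = 1 for all t, let γ : ℝ → ℝ be differentiable with γ(t) > 0, let k₁, λ : ℝ → ℝ be functions, set ω_r(t) := k_r(t) × k_r'(t) and ω(t) := (k₁(t) + γ'(t)/γ(t)) · (k(t) × k_r(t)) + ω_r(t) + λ(t) · k(t), and suppose k'(t) = ω(t) × k(t). Then at every t with ⟨k(t), k_r(t)⟩ ≠ −1, the function V₁(t) := (γ(t)²/2) · (1 − ⟨k(t), k_r(t)⟩)/(1 + ⟨k(t), k_r(t)⟩) is differentiable and satisfies V₁'(t) = −2 k₁(t) V₁(t). -/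

import Mathlib

/-!
Write `c = ⟪k, kᵣ⟫` and `a = k₁ + γ'/γ`. Expanding the vector triple products, the feedforward
term `kᵣ × kᵣ'` exactly cancels the motion of the unit reference `kᵣ` (as `⟪kᵣ, kᵣ'⟫ = 0`), the
spin `λ k` does not move `k`, and the feedback term gives `c' = a (1 - c²)`. Since
`((1 - c)/(1 + c))' = -2c'/(1 + c)² = -2a (1 - c)/(1 + c)`, the product rule then gives
`V₁' = 2 (γ'/γ - a) V₁ = -2 k₁ V₁`.
-/

open Real RealInnerProductSpace

noncomputable def cross3 (a b : EuclideanSpace ℝ (Fin 3)) : EuclideanSpace ℝ (Fin 3) :=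
  WithLp.toLp 2 ![a 1 * b 2 - a 2 * b 1, a 2 * b 0 - a 0 * b 2, a 0 * b 1 - a 1 * b 0]

open Matrix

local notation "ℝ³" => EuclideanSpace ℝ (Fin 3)

theorem cross3_eq_crossProduct (a b : ℝ³) :
    cross3 a b = WithLp.toLp 2 (WithLp.ofLp a ⨯₃ WithLp.ofLp b) := rfl

theorem real_inner_eq_dotProduct {ι : Type*} [Fintype ι] (a b : EuclideanSpace ℝ ι) :
    ⟪a, b⟫ = WithLp.ofLp a ⬝ᵥ WithLp.ofLp b := by
  rw [EuclideanSpace.inner_eq_star_dotProduct, star_trivial, dotProduct_comm]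

theorem cross3_add_left (u v w : ℝ³) : cross3 (u + v) w = cross3 u w + cross3 v w := by
  simp [cross3_eq_crossProduct]

theorem cross3_smul_left (r : ℝ) (u w : ℝ³) : cross3 (r • u) w = r • cross3 u w := by
  simp [cross3_eq_crossProduct]

theorem cross3_self (u : ℝ³) : cross3 u u = 0 := by
  simp [cross3_eq_crossProduct]

theorem cross3_cross3 (u v w : ℝ³) : cross3 (cross3 u v) w = ⟪u, w⟫ • v - ⟪v, w⟫ • u := by
  simp [cross3_eq_crossProduct, cross_cross_eq_smul_sub_smul, real_inner_eq_dotProduct]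

theorem inner_cross3_feedback_cross3 (a lam : ℝ) (u v w : ℝ³) :
    ⟪cross3 (a • cross3 u v + cross3 v w + lam • u) u, v⟫
      = a * (⟪u, u⟫ * ⟪v, v⟫ - ⟪u, v⟫ ^ 2) + ⟪u, v⟫ * ⟪v, w⟫ - ⟪u, w⟫ * ⟪v, v⟫ := by
  simp only [cross3_add_left, cross3_smul_left, cross3_cross3, cross3_self, smul_zero, add_zero,
    inner_add_left, inner_sub_left, inner_smul_left, conj_trivial]
  rw [real_inner_comm v u, real_inner_comm w v, real_inner_comm w u]
  ring

theorem inner_deriv_eq_zero_of_norm_eq_const {F : Type*} [NormedAddCommGroup F]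
    [InnerProductSpace ℝ F] {f : ℝ → F} {f' : F} {x r : ℝ} (hnorm : ∀ t, ‖f t‖ = r)
    (hf : HasDerivAt f f' x) : ⟪f x, f'⟫ = 0 := by
  have hconst : HasDerivAt (‖f ·‖ ^ 2) 0 x := by
    simpa only [hnorm] using hasDerivAt_const x (r ^ 2)
  simpa using hf.norm_sq.unique hconst

theorem hasDerivAt_inner_of_feedback {k kr : ℝ → ℝ³} {kr' : ℝ³} {a lam t : ℝ}
    (hk_unit : ‖k t‖ = 1) (hkr_unit : ‖kr t‖ = 1) (horth : ⟪kr t, kr'⟫ = 0)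
    (hkr : HasDerivAt kr kr' t)
    (hk : HasDerivAt k (cross3 (a • cross3 (k t) (kr t) + cross3 (kr t) kr' + lam • k t) (k t)) t) :
    HasDerivAt (fun s => ⟪k s, kr s⟫) (a * (1 - ⟪k t, kr t⟫ ^ 2)) t := by
  refine (hk.inner ℝ hkr).congr_deriv ?_
  rw [inner_cross3_feedback_cross3, real_inner_self_eq_norm_sq, real_inner_self_eq_norm_sq,
    hk_unit, hkr_unit, horth]
  ring

theorem hasDerivAt_lyapunov {γ c : ℝ → ℝ} {γ' a t : ℝ} (hγ : HasDerivAt γ γ' t) (hγ0 : γ t ≠ 0)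
    (hc : HasDerivAt c (a * (1 - c t ^ 2)) t) (hc1 : 1 + c t ≠ 0) :
    HasDerivAt (fun s => γ s ^ 2 / 2 * ((1 - c s) / (1 + c s)))
      (-2 * (a - γ' / γ t) * (γ t ^ 2 / 2 * ((1 - c t) / (1 + c t)))) t := by
  refine (((hγ.pow 2).div_const 2).mul ((hc.const_sub 1).div (hc.const_add 1) hc1)).congr_deriv ?_
  simp only [Pi.div_apply, Pi.pow_apply]
  field_simp
  ring

/-- Lyapunov derivative for the thrust direction controller:
under the feedback `ω = (k₁ + γ'/γ) (k × k_r) + ω_r + λ k` with `ω_r = k_r × k_r'`,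
`k' = ω × k`, `k, k_r` unit curves and `γ > 0` differentiable, for every `t` with
`⟨k(t), k_r(t)⟩ ≠ −1` the function `V₁ = (γ²/2)(1 − ⟨k,k_r⟩)/(1 + ⟨k,k_r⟩)` satisfies
`V₁'(t) = −2 k₁(t) V₁(t)`. -/
theorem stmt11 (k kr kr' : ℝ → EuclideanSpace ℝ (Fin 3))
    (γ γ' k₁ lam : ℝ → ℝ)
    (hkunit : ∀ t, ‖k t‖ = 1) (hkrunit : ∀ t, ‖kr t‖ = 1)
    (hkr : ∀ t, HasDerivAt kr (kr' t) t)
    (hγ : ∀ t, HasDerivAt γ (γ' t) t) (hγpos : ∀ t, 0 < γ t)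
    (ωr ω : ℝ → EuclideanSpace ℝ (Fin 3))
    (hωr : ∀ t, ωr t = cross3 (kr t) (kr' t))
    (hω : ∀ t, ω t = (k₁ t + γ' t / γ t) • cross3 (k t) (kr t) + ωr t + lam t • k t)
    (hk : ∀ t, HasDerivAt k (cross3 (ω t) (k t)) t)
    (V₁ : ℝ → ℝ)
    (hV₁ : ∀ t, V₁ t = γ t ^ 2 / 2 * ((1 - ⟪k t, kr t⟫) / (1 + ⟪k t, kr t⟫))) :
    ∀ t, ⟪k t, kr t⟫ ≠ -1 → HasDerivAt V₁ (-2 * k₁ t * V₁ t) t := by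
  intro t hne
  have hk_t := hk t
  rw [hω t, hωr t] at hk_t
  have halign := hasDerivAt_inner_of_feedback (hkunit t) (hkrunit t)
    (inner_deriv_eq_zero_of_norm_eq_const hkrunit (hkr t)) (hkr t) hk_t
  have hden : 1 + ⟪k t, kr t⟫ ≠ 0 := fun h => hne (by linarith)
  rw [hV₁ t, funext hV₁]
  convert hasDerivAt_lyapunov (hγ t) (hγpos t).ne' halign hden using 2
  ring
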